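/- arXiv:1501.05477 — 6 statements merged into one kernel-verified Lean document; each statement's English description precedes it below -/
import Mathlib

section
/- Let f : (ZMod 2)^{2m} → ZMod 2 be defined by decomposition into four functions on (ZMod 2)^{2m-2}: f(00⊙i) = f₀(i), f(01⊙i) = f₁(i), f(10⊙i) = f₂(i), f(11⊙i) = f₃(i), where ⊙ denotes prepending two bits. If f₀, f₁, f₂, f₃ are all bent and their duals satisfy f̃₀ + f̃₁ + f̃₂ + f̃₃ = 1 identically, then f is bent. -/
/-! Splitting the Walsh sum of `f` at `c₀c₁a` by the first two bits of `x` gives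
`∑_b (-1)^{c·b} W_{f_b}(a) = 2^m ∑_b (-1)^{c·b + d_b(a)}`. The four exponents sum to
`∑_b c·b + ∑_b d_b(a) = 0 + 1` in `ZMod 2`, so an odd number of the four signs is negative
and the sum has absolute value `2`. -/

/-- Standard dot product on `(ZMod 2)^n`. -/
def dotp (n : ℕ) (a x : Fin n → ZMod 2) : ZMod 2 := ∑ j, a j * x j

/-- Walsh–Hadamard transform of a Boolean function. -/
def walsh (n : ℕ) (f : (Fin n → ZMod 2) → ZMod 2) (a : Fin n → ZMod 2) : ℤ :=
  ∑ x : Fin n → ZMod 2, (-1 : ℤ) ^ (f x + dotp n a x).val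

/-- A Boolean function on `(ZMod 2)^{2m}` is bent if its Walsh–Hadamard transform has
constant magnitude `2^m`. -/
def IsBent (m : ℕ) (f : (Fin (2 * m) → ZMod 2) → ZMod 2) : Prop :=
  ∀ a, |walsh (2 * m) f a| = 2 ^ m

/-- `g` is the dual of the bent function `f`. -/
def IsDualOf (m : ℕ) (g f : (Fin (2 * m) → ZMod 2) → ZMod 2) : Prop :=
  ∀ a, walsh (2 * m) f a = 2 ^ m * (-1 : ℤ) ^ (g a).val

/-- Prepend a pair of bits to a bit string. -/
def prepend2 (n : ℕ) (b₁ b₂ : ZMod 2) (i : Fin n → ZMod 2) : Fin (n + 2) → ZMod 2 :=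
  Fin.cons b₁ (Fin.cons b₂ i)

theorem Fintype.sum_fin_succ_pi {α M : Type*} [Fintype α] [AddCommMonoid M] (n : ℕ)
    (g : (Fin (n + 1) → α) → M) :
    ∑ x, g x = ∑ b, ∑ y : Fin n → α, g (Fin.cons b y) := by
  rw [← (Fin.consEquiv fun _ => α).sum_comp, Fintype.sum_prod_type]
  rfl

theorem ZMod.sum_univ_two {M : Type*} [AddCommMonoid M] (g : ZMod 2 → M) :
    ∑ b, g b = g 0 + g 1 :=
  Fin.sum_univ_two g

theorem ZMod.neg_one_pow_val_add (u v : ZMod 2) :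
    (-1 : ℤ) ^ (u + v).val = (-1) ^ u.val * (-1) ^ v.val := by
  revert u v; decide

theorem dotp_cons (n : ℕ) (c b : ZMod 2) (a x : Fin n → ZMod 2) :
    dotp (n + 1) (Fin.cons c a) (Fin.cons b x) = c * b + dotp n a x := by
  simp [dotp, Fin.sum_univ_succ]

theorem walsh_cons (n : ℕ) (f : (Fin (n + 1) → ZMod 2) → ZMod 2) (c : ZMod 2)
    (a : Fin n → ZMod 2) :
    walsh (n + 1) f (Fin.cons c a) =
      ∑ b : ZMod 2, (-1) ^ (c * b).val * walsh n (fun x => f (Fin.cons b x)) a := by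
  simp only [walsh, Fintype.sum_fin_succ_pi, dotp_cons, Finset.mul_sum]
  refine Finset.sum_congr rfl fun b _ => Finset.sum_congr rfl fun x _ => ?_
  rw [add_left_comm, ZMod.neg_one_pow_val_add]

theorem walsh_prepend2 (n : ℕ) (f : (Fin (n + 2) → ZMod 2) → ZMod 2) (c₀ c₁ : ZMod 2)
    (a : Fin n → ZMod 2) :
    walsh (n + 2) f (prepend2 n c₀ c₁ a) =
      walsh n (fun x => f (prepend2 n 0 0 x)) a
        + (-1) ^ c₁.val * walsh n (fun x => f (prepend2 n 0 1 x)) a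
        + (-1) ^ c₀.val * walsh n (fun x => f (prepend2 n 1 0 x)) a
        + (-1) ^ c₀.val * (-1) ^ c₁.val * walsh n (fun x => f (prepend2 n 1 1 x)) a := by
  simp only [prepend2, walsh_cons, ZMod.sum_univ_two, mul_zero, mul_one, ZMod.val_zero,
    pow_zero, one_mul, mul_add]
  ring

theorem abs_signed_sum_eq_two (c₀ c₁ e₀ e₁ e₂ e₃ : ZMod 2) (h : e₀ + e₁ + e₂ + e₃ = 1) :
    |(-1 : ℤ) ^ e₀.val + (-1) ^ c₁.val * (-1) ^ e₁.val + (-1) ^ c₀.val * (-1) ^ e₂.val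
      + (-1) ^ c₀.val * (-1) ^ c₁.val * (-1) ^ e₃.val| = 2 := by
  revert c₀ c₁ e₀ e₁ e₂ e₃; decide

theorem bent_of_four_bent_decomposition_general (m : ℕ)
    (f : (Fin (2 * (m + 1)) → ZMod 2) → ZMod 2)
    (f₀ f₁ f₂ f₃ d₀ d₁ d₂ d₃ : (Fin (2 * m) → ZMod 2) → ZMod 2)
    (hf₀ : ∀ i, f (prepend2 (2 * m) 0 0 i) = f₀ i)
    (hf₁ : ∀ i, f (prepend2 (2 * m) 0 1 i) = f₁ i)
    (hf₂ : ∀ i, f (prepend2 (2 * m) 1 0 i) = f₂ i)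
    (hf₃ : ∀ i, f (prepend2 (2 * m) 1 1 i) = f₃ i)
    (hd₀ : IsDualOf m d₀ f₀) (hd₁ : IsDualOf m d₁ f₁)
    (hd₂ : IsDualOf m d₂ f₂) (hd₃ : IsDualOf m d₃ f₃)
    (hsum : ∀ i, d₀ i + d₁ i + d₂ i + d₃ i = 1) :
    IsBent (m + 1) f := by
  intro a
  obtain ⟨c₀, c₁, a', rfl⟩ : ∃ c₀ c₁ a', prepend2 (2 * m) c₀ c₁ a' = a :=
    ⟨a 0, Fin.tail a 0, Fin.tail (Fin.tail a), by simp only [prepend2, Fin.cons_self_tail]⟩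
  have hW : walsh (2 * m + 2) f (prepend2 (2 * m) c₀ c₁ a') = 2 ^ m *
      ((-1) ^ (d₀ a').val + (-1) ^ c₁.val * (-1) ^ (d₁ a').val + (-1) ^ c₀.val * (-1) ^ (d₂ a').val
        + (-1) ^ c₀.val * (-1) ^ c₁.val * (-1) ^ (d₃ a').val) := by
    rw [walsh_prepend2, funext hf₀, funext hf₁, funext hf₂, funext hf₃, hd₀, hd₁, hd₂, hd₃]
    ring
  change |walsh (2 * m + 2) f _| = _
  rw [hW, abs_mul, abs_pow, abs_two, abs_signed_sum_eq_two c₀ c₁ _ _ _ _ (hsum a'), pow_succ]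

/-- Tokareva's criterion: if a Boolean function on `(ZMod 2)^{2m+2}` decomposes into four
bent functions on `(ZMod 2)^{2m}` whose duals sum to the constant `1`, then it is bent. -/
theorem bent_of_four_bent_decomposition (m : ℕ)
    (f : (Fin (2 * (m + 1)) → ZMod 2) → ZMod 2)
    (f₀ f₁ f₂ f₃ d₀ d₁ d₂ d₃ : (Fin (2 * m) → ZMod 2) → ZMod 2)
    (hf₀ : ∀ i, f (prepend2 (2 * m) 0 0 i) = f₀ i)
    (hf₁ : ∀ i, f (prepend2 (2 * m) 0 1 i) = f₁ i)
    (hf₂ : ∀ i, f (prepend2 (2 * m) 1 0 i) = f₂ i)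
    (hf₃ : ∀ i, f (prepend2 (2 * m) 1 1 i) = f₃ i)
    (hb₀ : IsBent m f₀) (hb₁ : IsBent m f₁) (hb₂ : IsBent m f₂) (hb₃ : IsBent m f₃)
    (hd₀ : IsDualOf m d₀ f₀) (hd₁ : IsDualOf m d₁ f₁)
    (hd₂ : IsDualOf m d₂ f₂) (hd₃ : IsDualOf m d₃ f₃)
    (hsum : ∀ i, d₀ i + d₁ i + d₂ i + d₃ i = 1) :
    IsBent (m + 1) f :=
  bent_of_four_bent_decomposition_general m f f₀ f₁ f₂ f₃ d₀ d₁ d₂ d₃ hf₀ hf₁ hf₂ hf₃ hd₀ hd₁ hd₂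
    hd₃ hsum
end

section
/- For the bent function σ_m on (ZMod 2)^{2m} (parity of the number of 01 bit-pairs), the set σ_m⁻¹(1) is a Hadamard difference set with parameters v = 4^m, k = 2^{2m−1} − 2^{m−1}, λ = 2^{2m−2} − 2^{m−1}. -/
/-- The sign-of-square function `σ_m` on bit strings: the parity of the number of
bit-pairs equal to `01`. -/
def sigma (m : ℕ) (i : Fin (2 * m) → ZMod 2) : ZMod 2 :=
  ∑ j : Fin m,
    if i ⟨2 * j.1, by have := j.2; omega⟩ = 0 ∧ i ⟨2 * j.1 + 1, by have := j.2; omega⟩ = 1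
    then 1 else 0


/-! With `ψ a = (-1)^a`, the indicator of `D = σ⁻¹(1)` is `(1 - ψ ∘ σ) / 2`, so
`2|D| = 4^m - Σ ψ(σ x)` and
`4|D ∩ (D + g)| = 4^m - 2 Σ ψ(σ x) + Σ ψ(σ x) ψ(σ (x - g))`.
Reading `x` as `m` pairs of bits, `σ` is the sum of the block function
`h(a, b) = [a = 0 ∧ b = 1]` over the pairs, so both character sums factor over the pairs.
For a single block, `Σ ψ(h) = 2` and the autocorrelation of `ψ ∘ h` vanishes at every
nonzero shift; hence `Σ ψ(σ x) = 2^m` and `Σ ψ(σ x) ψ(σ (x - g)) = 0` for `g ≠ 0`. -/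

open Finset

lemma AddChar.map_sum_eq_prod {ι A R : Type*} [AddCommMonoid A] [CommMonoid R]
    (ψ : AddChar A R) (s : Finset ι) (a : ι → A) : ψ (∑ j ∈ s, a j) = ∏ j ∈ s, ψ (a j) := by
  classical
  induction s using Finset.induction_on with
  | empty => simp
  | insert i s hi ih => rw [sum_insert hi, prod_insert hi, AddChar.map_add_eq_mul, ih]

section BlockSums

variable {ι α M R : Type*} [Fintype ι] [DecidableEq ι] [Fintype α] [AddCommMonoid M]
  [CommRing R] (ψ : AddChar M R) (h : α → M)

lemma sum_addChar_sum_blocks :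
    ∑ y : ι → α, ψ (∑ j, h (y j)) = (∑ v, ψ (h v)) ^ Fintype.card ι := by
  simp only [AddChar.map_sum_eq_prod]
  rw [← Fintype.prod_sum fun _ v => ψ (h v), prod_const, card_univ]

lemma sum_addChar_sum_blocks_mul_sub [AddGroup α] (u : ι → α) :
    ∑ y : ι → α, ψ (∑ j, h (y j)) * ψ (∑ j, h ((y - u) j)) =
      ∏ j, ∑ v, ψ (h v) * ψ (h (v - u j)) := by
  simp only [AddChar.map_sum_eq_prod, Pi.sub_apply, ← prod_mul_distrib]
  exact (Fintype.prod_sum fun j v => ψ (h v) * ψ (h (v - u j))).symm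

lemma sum_addChar_sum_blocks_mul_sub_eq_zero [AddGroup α]
    (hh : ∀ w ≠ 0, ∑ v, ψ (h v) * ψ (h (v - w)) = 0) {u : ι → α} (hu : u ≠ 0) :
    ∑ y : ι → α, ψ (∑ j, h (y j)) * ψ (∑ j, h ((y - u) j)) = 0 := by
  obtain ⟨j, hj⟩ := Function.ne_iff.mp hu
  rw [sum_addChar_sum_blocks_mul_sub]
  exact prod_eq_zero (mem_univ j) (hh (u j) hj)

end BlockSums

def signChar : AddChar (ZMod 2) ℤ where
  toFun a := if a = 0 then 1 else -1
  map_zero_eq_one' := rfl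
  map_add_eq_mul' := by decide

lemma one_sub_signChar (a : ZMod 2) : 1 - signChar a = 2 * if a = 1 then 1 else 0 := by
  revert a; decide

lemma one_sub_signChar_mul_one_sub_signChar (a b : ZMod 2) :
    (1 - signChar a) * (1 - signChar b) = 4 * if a = 1 ∧ b = 1 then 1 else 0 := by
  revert a b; decide

lemma two_mul_card_filter_eq_one_add_sum_signChar {α : Type*} [Fintype α] (f : α → ZMod 2) :
    2 * (#{x | f x = 1} : ℤ) + ∑ x, signChar (f x) = Fintype.card α := by
  have hsum : ∑ x, (1 - signChar (f x)) = 2 * (#{x | f x = 1} : ℤ) := by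
    simp only [one_sub_signChar, ← mul_sum, natCast_card_filter]
  rw [← hsum, sum_sub_distrib, sum_const, card_univ, nsmul_one, sub_add_cancel]

lemma four_mul_card_filter_eq_one_and_sub_add_sum_signChar {G : Type*} [AddGroup G]
    [Fintype G] (f : G → ZMod 2) (g : G) :
    4 * (#{x | f x = 1 ∧ f (x - g) = 1} : ℤ) + 2 * ∑ x, signChar (f x) =
      Fintype.card G + ∑ x, signChar (f x) * signChar (f (x - g)) := by
  have hshift : ∑ x, signChar (f (x - g)) = ∑ x, signChar (f x) :=
    (Equiv.subRight g).sum_comp fun x => signChar (f x)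
  have hsum : ∑ x, (1 - signChar (f x)) * (1 - signChar (f (x - g))) =
      4 * (#{x | f x = 1 ∧ f (x - g) = 1} : ℤ) := by
    simp only [one_sub_signChar_mul_one_sub_signChar, ← mul_sum, natCast_card_filter]
  have hexpand : ∀ a b : ℤ, (1 - a) * (1 - b) = 1 - a - b + a * b := fun a b => by ring
  simp only [← hsum, hexpand, sum_add_distrib, sum_sub_distrib, hshift, sum_const, card_univ,
    nsmul_one]
  ring

lemma card_filter_eq_sub_product {G : Type*} [AddCommGroup G] [DecidableEq G] (s : Finset G)
    (g : G) : #{p ∈ s ×ˢ s | g = p.1 - p.2} = #{x ∈ s | x - g ∈ s} := by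
  refine card_nbij' Prod.fst (fun x => (x, x - g)) ?_ ?_ ?_ ?_
  · rintro ⟨x, y⟩ hxy
    simp only [coe_filter, mem_product, Set.mem_ofPred_eq] at hxy ⊢
    obtain ⟨⟨hx, hy⟩, rfl⟩ := hxy
    simpa [sub_sub_cancel] using ⟨hx, hy⟩
  · intro x hx
    simp_all [sub_sub_cancel]
  · rintro ⟨x, y⟩ hxy
    simp only [coe_filter, mem_product, Set.mem_ofPred_eq] at hxy
    simp [hxy.2, sub_sub_cancel]
  · intro x _
    rfl

def pairCoords (m : ℕ) (β : Type*) [Add β] : (Fin (2 * m) → β) ≃+ (Fin m → β × β) where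
  toFun x j := (x ⟨2 * j, by omega⟩, x ⟨2 * j + 1, by omega⟩)
  invFun y i := if i.1 % 2 = 0 then (y ⟨i / 2, by omega⟩).1 else (y ⟨i / 2, by omega⟩).2
  left_inv x := by
    funext ⟨i, hi⟩
    by_cases h : i % 2 = 0 <;> simp only [h, if_true, if_false] <;> congr 1 <;> ext <;> simp <;>
      omega
  right_inv y := by
    funext j
    have h2j : (2 * j.1) / 2 = j := by omega
    have h2j1 : (2 * j.1 + 1) / 2 = j := by omega
    ext <;> simp [h2j, h2j1]
  map_add' _ _ := rfl

def pairBlock (v : ZMod 2 × ZMod 2) : ZMod 2 := if v.1 = 0 ∧ v.2 = 1 then 1 else 0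

lemma sigma_eq_sum_pairBlock (m : ℕ) (x : Fin (2 * m) → ZMod 2) :
    sigma m x = ∑ j, pairBlock (pairCoords m (ZMod 2) x j) := rfl

lemma sum_signChar_sigma (m : ℕ) : ∑ x, signChar (sigma m x) = 2 ^ m := by
  have hblock : ∑ v, signChar (pairBlock v) = 2 := by decide
  simp only [sigma_eq_sum_pairBlock]
  rw [(pairCoords m (ZMod 2)).bijective.sum_comp fun y => signChar (∑ j, pairBlock (y j)),
    sum_addChar_sum_blocks, hblock, Fintype.card_fin]

lemma sum_signChar_sigma_mul_sigma_sub (m : ℕ) {g : Fin (2 * m) → ZMod 2} (hg : g ≠ 0) :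
    ∑ x, signChar (sigma m x) * signChar (sigma m (x - g)) = 0 := by
  have hblock : ∀ w ≠ 0, ∑ v, signChar (pairBlock v) * signChar (pairBlock (v - w)) = 0 := by
    decide
  simp only [sigma_eq_sum_pairBlock, map_sub]
  rw [(pairCoords m (ZMod 2)).bijective.sum_comp fun y => signChar (∑ j, pairBlock (y j)) *
    signChar (∑ j, pairBlock ((y - pairCoords m (ZMod 2) g) j))]
  exact sum_addChar_sum_blocks_mul_sub_eq_zero signChar pairBlock hblock
    ((AddEquivClass.map_ne_zero_iff).mpr hg)

lemma four_pow_eq_and_two_pow_pred_le {m : ℕ} (hm : 1 ≤ m) :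
    4 ^ m = 2 * 2 ^ (2 * m - 1) ∧ 4 ^ m = 4 * 2 ^ (2 * m - 2) ∧ 2 ^ m = 2 * 2 ^ (m - 1) ∧
      2 ^ (m - 1) ≤ 2 ^ (2 * m - 2) := by
  obtain ⟨n, rfl⟩ : ∃ n, m = n + 1 := ⟨m - 1, by omega⟩
  refine ⟨?_, ?_, ?_, Nat.pow_le_pow_right two_pos (by omega)⟩
  all_goals
    simp only [show 2 * (n + 1) - 1 = 2 * n + 1 by omega, show 2 * (n + 1) - 2 = 2 * n by omega,
      Nat.add_sub_cancel, pow_succ, pow_mul]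
    ring

/-- `σ_m⁻¹(1)` is a Hadamard difference set in `(ZMod 2)^{2m}` with parameters
`v = 4^m`, `k = 2^{2m-1} - 2^{m-1}`, `λ = 2^{2m-2} - 2^{m-1}`. -/
theorem sigma_preimage_one_hadamard_difference_set (m : ℕ) (hm : 1 ≤ m) :
    Fintype.card (Fin (2 * m) → ZMod 2) = 4 ^ m ∧
    (Finset.univ.filter (fun i : Fin (2 * m) → ZMod 2 => sigma m i = 1)).card
        = 2 ^ (2 * m - 1) - 2 ^ (m - 1) ∧
    (∀ g : Fin (2 * m) → ZMod 2, g ≠ 0 →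
      (((Finset.univ.filter (fun i : Fin (2 * m) → ZMod 2 => sigma m i = 1)) ×ˢ
        (Finset.univ.filter (fun i : Fin (2 * m) → ZMod 2 => sigma m i = 1))).filter
          (fun p => g = p.1 - p.2)).card = 2 ^ (2 * m - 2) - 2 ^ (m - 1)) ∧
    (4 : ℤ) ^ m = 4 * (((2 : ℤ) ^ (2 * m - 1) - 2 ^ (m - 1)) -
      ((2 : ℤ) ^ (2 * m - 2) - 2 ^ (m - 1))) := by
  set D : Finset (Fin (2 * m) → ZMod 2) := {x | sigma m x = 1}
  have hcard : Fintype.card (Fin (2 * m) → ZMod 2) = 4 ^ m := by simp [pow_mul]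
  have hk : 2 * #D + 2 ^ m = 4 ^ m := by
    have := two_mul_card_filter_eq_one_add_sum_signChar (sigma m)
    rw [sum_signChar_sigma, hcard] at this
    exact_mod_cast this
  have hl (g : Fin (2 * m) → ZMod 2) (hg : g ≠ 0) :
      4 * #{p ∈ D ×ˢ D | g = p.1 - p.2} + 2 * 2 ^ m = 4 ^ m := by
    have hpairs :
        #{p ∈ D ×ˢ D | g = p.1 - p.2} = #{x | sigma m x = 1 ∧ sigma m (x - g) = 1} := by
      rw [card_filter_eq_sub_product, filter_filter]
      simp [D]
    have := four_mul_card_filter_eq_one_and_sub_add_sum_signChar (sigma m) g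
    rw [sum_signChar_sigma, sum_signChar_sigma_mul_sigma_sub m hg, hcard, add_zero] at this
    rw [hpairs]
    exact_mod_cast this
  obtain ⟨h1, h2, h3, h4⟩ := four_pow_eq_and_two_pow_pred_le hm
  refine ⟨hcard, by omega, fun g hg => by have := hl g hg; omega, ?_⟩
  have h1' : (4 : ℤ) ^ m = 2 * 2 ^ (2 * m - 1) := by exact_mod_cast h1
  have h2' : (4 : ℤ) ^ m = 4 * 2 ^ (2 * m - 2) := by exact_mod_cast h2
  linarith
end

section
/- The cardinality of τ_m⁻¹(1) equals 2^{2m−1} − 2^{m−1}, where τ_m is defined recursively by τ_1(10)=1 and 0 otherwise, and τ_m(00⊙i)=τ_{m−1}(i), τ_m(01⊙i)=σ_{m−1}(i), τ_m(10⊙i)=σ_{m−1}(i)+1, τ_m(11⊙i)=τ_{m−1}(i). -/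
/-- The tail of a bit string after removing its leading bit-pair. -/
def tail2 (m : ℕ) (i : Fin (2 * (m + 1)) → ZMod 2) (j : Fin (2 * m)) : ZMod 2 :=
  i ⟨j.1 + 2, by have := j.2; omega⟩

/-- The non-diagonal-symmetry function `τ_m`, defined recursively:
`τ_m(00⊙i) = τ_{m-1}(i)`, `τ_m(01⊙i) = σ_{m-1}(i)`, `τ_m(10⊙i) = σ_{m-1}(i) + 1`,
`τ_m(11⊙i) = τ_{m-1}(i)`; in particular `τ_1(10) = 1` and `τ_1 = 0` otherwise. -/
def tau : (m : ℕ) → (Fin (2 * m) → ZMod 2) → ZMod 2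
  | 0, _ => 0
  | m + 1, i =>
    if i ⟨0, by omega⟩ = 0 ∧ i ⟨1, by omega⟩ = 0 then tau m (tail2 m i)
    else if i ⟨0, by omega⟩ = 0 ∧ i ⟨1, by omega⟩ = 1 then sigma m (tail2 m i)
    else if i ⟨0, by omega⟩ = 1 ∧ i ⟨1, by omega⟩ = 0 then sigma m (tail2 m i) + 1
    else tau m (tail2 m i)

/-!
Splitting off the leading bit pair, the pairs `00` and `11` each contribute a copy of
`τ_{m-1}⁻¹(1)`, while `01` and `10` contribute `σ_{m-1}⁻¹(1)` and its complement, i.e. all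
`4^{m-1}` strings together. Hence `c_m = 2 c_{m-1} + 4^{m-1}` with `c_0 = 0`, which is solved by
`2^{2m-1} - 2^{m-1}`.
-/

open Finset

/-- The string `ab ⊙ j`. -/
def cons2 {α : Type*} (m : ℕ) (a b : α) (j : Fin (2 * m) → α) : Fin (2 * (m + 1)) → α :=
  fun k => if h0 : k.1 = 0 then a else if h1 : k.1 = 1 then b
    else j ⟨k.1 - 2, by have := k.2; omega⟩

section cons2

variable {α : Type*} (m : ℕ)

def cons2Equiv : (α × α) × (Fin (2 * m) → α) ≃ (Fin (2 * (m + 1)) → α) where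
  toFun p := cons2 m p.1.1 p.1.2 p.2
  invFun i :=
    ((i ⟨0, by omega⟩, i ⟨1, by omega⟩), fun j => i ⟨j.1 + 2, by have := j.2; omega⟩)
  left_inv p := by
    ext j
    · rfl
    · rfl
    · simp [cons2]
  right_inv i := by
    funext k
    simp only [cons2]
    split_ifs with h0 h1
    · exact congrArg i (Fin.ext h0.symm)
    · exact congrArg i (Fin.ext h1.symm)
    · exact congrArg i (Fin.ext (by simp; omega))

theorem card_filter_eq_sum_cons2 [Fintype α] [DecidableEq α]
    (P : (Fin (2 * (m + 1)) → α) → Prop) [DecidablePred P] :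
    #{i | P i} = ∑ a : α, ∑ b : α, #{j | P (cons2 m a b j)} := by
  simp only [card_filter]
  rw [← (cons2Equiv m).sum_comp, Fintype.sum_prod_type, Fintype.sum_prod_type]
  rfl

end cons2

theorem tail2_cons2 (m : ℕ) (a b : ZMod 2) (j : Fin (2 * m) → ZMod 2) :
    tail2 m (cons2 m a b j) = j := by
  funext k
  simp [tail2, cons2]

theorem tau_cons2 (m : ℕ) (a b : ZMod 2) (j : Fin (2 * m) → ZMod 2) :
    tau (m + 1) (cons2 m a b j) = if a = b then tau m j else sigma m j + a := by
  simp only [tau, tail2_cons2, cons2, dite_true, one_ne_zero, dite_false]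
  generalize tau m j = t
  generalize sigma m j = s
  revert a b s t
  decide

theorem card_filter_eq_zero_add_card_filter_eq_one {ι : Type*} [Fintype ι] (f : ι → ZMod 2) :
    #{x | f x = 0} + #{x | f x = 1} = Fintype.card ι := by
  have hne : ∀ y : ZMod 2, y = 1 ↔ ¬y = 0 := by decide
  simp only [hne]
  rw [card_filter_add_card_filter_not, card_univ]

theorem card_tau_succ (m : ℕ) :
    #{i : Fin (2 * (m + 1)) → ZMod 2 | tau (m + 1) i = 1}
      = 2 * #{j : Fin (2 * m) → ZMod 2 | tau m j = 1} + 2 ^ (2 * m) := by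
  rw [card_filter_eq_sum_cons2]
  have sum_zmod_two : ∀ f : ZMod 2 → ℕ, ∑ a, f a = f 0 + f 1 := Fin.sum_univ_two
  simp only [tau_cons2, sum_zmod_two, ↓reduceIte, zero_ne_one, add_zero, one_ne_zero,
    add_eq_right]
  have hσ := card_filter_eq_zero_add_card_filter_eq_one (sigma m)
  simp only [Fintype.card_fun, ZMod.card, Fintype.card_fin] at hσ
  omega

theorem two_mul_sub_add_pow (n : ℕ) :
    2 * (2 ^ (2 * n - 1) - 2 ^ (n - 1)) + 2 ^ (2 * n)
      = 2 ^ (2 * (n + 1) - 1) - 2 ^ (n + 1 - 1) := by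
  rcases n with _ | n
  · rfl
  · have hle : 2 ^ n ≤ 2 ^ (2 * n) := Nat.pow_le_pow_right two_pos (by omega)
    have e1 : 2 ^ (2 * (n + 1) - 1) = 2 * 2 ^ (2 * n) := by
      rw [show 2 * (n + 1) - 1 = 2 * n + 1 by omega, pow_succ, mul_comm]
    have e2 : 2 ^ (2 * (n + 1)) = 4 * 2 ^ (2 * n) := by rw [mul_add, pow_add]; ring
    have e3 : 2 ^ (2 * (n + 1 + 1) - 1) = 8 * 2 ^ (2 * n) := by
      rw [show 2 * (n + 1 + 1) - 1 = 2 * n + 3 by omega, pow_add]; ring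
    simp only [e1, e2, e3, Nat.add_sub_cancel, pow_succ]
    omega

theorem card_tau_preimage_one_general (m : ℕ) :
    (Finset.univ.filter (fun i : Fin (2 * m) → ZMod 2 => tau m i = 1)).card
      = 2 ^ (2 * m - 1) - 2 ^ (m - 1) := by
  induction m with
  | zero => decide
  | succ n ih => rw [card_tau_succ, ih, two_mul_sub_add_pow]

/-- The cardinality of `τ_m⁻¹(1)` is `2^{2m-1} - 2^{m-1}`. -/
theorem card_tau_preimage_one (m : ℕ) (hm : 1 ≤ m) :
    (Finset.univ.filter (fun i : Fin (2 * m) → ZMod 2 => tau m i = 1)).card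
      = 2 ^ (2 * m - 1) - 2 ^ (m - 1) :=
  card_tau_preimage_one_general m
end

section
/- For all i ∈ (ZMod 2)^{2m}, the conditions σ_m(i) = 1 and τ_m(i) = 1 are mutually exclusive: σ_m(i) = 1 → τ_m(i) = 0. -/
/-!
Induct on `m`, peeling off the leading bit-pair. On `00` and `11` both `σ` and `τ` pass to the
tail unchanged, so the induction hypothesis applies; on `01` and `10` one has `τ = σ + 1`,
so `σ = 1` forces `τ = 0`.
-/

lemma zmod_two_eq_zero_or_one (x : ZMod 2) : x = 0 ∨ x = 1 := by
  decide +revert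

section LeadingPair

variable {m : ℕ} {i : Fin (2 * (m + 1)) → ZMod 2}

lemma sigma_succ :
    sigma (m + 1) i =
      (if i ⟨0, by omega⟩ = 0 ∧ i ⟨1, by omega⟩ = 1 then 1 else 0) + sigma m (tail2 m i) := by
  rw [sigma, Fin.sum_univ_succ]
  rfl

lemma sigma_succ_of_eq (h : i ⟨0, by omega⟩ = i ⟨1, by omega⟩) :
    sigma (m + 1) i = sigma m (tail2 m i) := by
  rw [sigma_succ, h]
  rcases zmod_two_eq_zero_or_one (i ⟨1, by omega⟩) with h1 | h1 <;> rw [h1] <;> simp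

lemma tau_succ_of_eq (h : i ⟨0, by omega⟩ = i ⟨1, by omega⟩) :
    tau (m + 1) i = tau m (tail2 m i) := by
  rw [tau, h]
  rcases zmod_two_eq_zero_or_one (i ⟨1, by omega⟩) with h1 | h1 <;> rw [h1] <;> simp

-- On a leading pair `ab` with `a ≠ b`, both sides equal `σ_m(tail) + a`.
lemma tau_succ_of_ne (h : i ⟨0, by omega⟩ ≠ i ⟨1, by omega⟩) :
    tau (m + 1) i = sigma (m + 1) i + 1 := by
  rw [tau, sigma_succ]
  rcases zmod_two_eq_zero_or_one (i ⟨0, by omega⟩) with h0 | h0 <;>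
    rcases zmod_two_eq_zero_or_one (i ⟨1, by omega⟩) with h1 | h1 <;>
    rw [h0, h1] at h ⊢ <;> grind

end LeadingPair

/-- The conditions `σ_m(i) = 1` and `τ_m(i) = 1` are mutually exclusive. -/
theorem sigma_tau_mutually_exclusive (m : ℕ) (i : Fin (2 * m) → ZMod 2)
    (h : sigma m i = 1) : tau m i = 0 := by
  induction m with
  | zero => simp [sigma] at h
  | succ m ih =>
    by_cases hpair : i ⟨0, by omega⟩ = i ⟨1, by omega⟩
    · rw [tau_succ_of_eq hpair]
      exact ih _ (sigma_succ_of_eq hpair ▸ h)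
    · rw [tau_succ_of_ne hpair, h]
      decide
end

section
/- For every m ≥ 1, there exists i ∈ (ZMod 2)^{2m} with σ_m(i) = 0 and τ_m(i) = 0 (e.g. i = 0); in fact the number of such i is exactly 2^m. -/
/-! Splitting off the leading bit-pair, `σ_{m+1}(ab ⊙ t) = τ_{m+1}(ab ⊙ t) = 0` holds exactly when
`a = b` and `σ_m(t) = τ_m(t) = 0`: for `ab = 01` or `10` it would force `σ_m(t)` to be both `0` and
`1`. So the common zeros of length `m + 1` are two copies of those of length `m`, and there are
`2 ^ m` of them; the zero string is one, by the same recursion. -/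

open Finset

/-- `consPair a b t` is the paper's `ab ⊙ t`. -/
def consPair {α : Type*} {m : ℕ} (a b : α) (t : Fin (2 * m) → α) : Fin (2 * (m + 1)) → α :=
  (Fin.cons a (Fin.cons b t : Fin (2 * m + 1) → α) : Fin (2 * m + 2) → α)

def consPairEquiv (α : Type*) (m : ℕ) : (α × α) × (Fin (2 * m) → α) ≃ (Fin (2 * (m + 1)) → α) :=
  (Equiv.prodAssoc α α _).trans
    ((Equiv.prodCongr (Equiv.refl α) (Fin.consEquiv fun _ => α)).trans (Fin.consEquiv fun _ => α))

theorem consPairEquiv_apply {α : Type*} {m : ℕ} (p : (α × α) × (Fin (2 * m) → α)) :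
    consPairEquiv α m p = consPair p.1.1 p.1.2 p.2 := rfl

theorem consPair_zero {α : Type*} [Zero α] {m : ℕ} :
    consPair (0 : α) 0 (0 : Fin (2 * m) → α) = 0 := by
  change Matrix.vecCons 0 (Matrix.vecCons 0 0) = 0
  rw [Matrix.cons_zero_zero, Matrix.cons_zero_zero]

theorem tail2_consPair {m : ℕ} (a b : ZMod 2) (t : Fin (2 * m) → ZMod 2) :
    tail2 m (consPair a b t) = t := rfl

theorem sigma_consPair {m : ℕ} (a b : ZMod 2) (t : Fin (2 * m) → ZMod 2) :
    sigma (m + 1) (consPair a b t) = (if a = 0 ∧ b = 1 then 1 else 0) + sigma m t := by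
  rw [sigma, Fin.sum_univ_succ]
  rfl

theorem tau_consPair {m : ℕ} (a b : ZMod 2) (t : Fin (2 * m) → ZMod 2) :
    tau (m + 1) (consPair a b t) =
      if a = 0 ∧ b = 0 then tau m t
      else if a = 0 ∧ b = 1 then sigma m t
      else if a = 1 ∧ b = 0 then sigma m t + 1
      else tau m t := by
  rw [tau, tail2_consPair]; rfl

theorem sigma_tau_consPair_eq_zero_iff {m : ℕ} (a b : ZMod 2) (t : Fin (2 * m) → ZMod 2) :
    (sigma (m + 1) (consPair a b t) = 0 ∧ tau (m + 1) (consPair a b t) = 0) ↔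
      a = b ∧ sigma m t = 0 ∧ tau m t = 0 := by
  rw [sigma_consPair, tau_consPair]
  -- only the values of `σ_m(t)` and `τ_m(t)` matter, so this is a finite check
  generalize sigma m t = s, tau m t = u
  revert a b s u
  decide

def commonZeros (m : ℕ) : Finset (Fin (2 * m) → ZMod 2) :=
  univ.filter fun i => sigma m i = 0 ∧ tau m i = 0

theorem zero_mem_commonZeros (m : ℕ) : 0 ∈ commonZeros m := by
  induction m with
  | zero => decide
  | succ m ih =>
    rw [commonZeros, mem_filter, ← consPair_zero, sigma_tau_consPair_eq_zero_iff]
    exact ⟨mem_univ _, rfl, (mem_filter.1 ih).2⟩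

theorem commonZeros_succ (m : ℕ) :
    commonZeros (m + 1) =
      (univ.diag ×ˢ commonZeros m).map (consPairEquiv (ZMod 2) m).toEmbedding := by
  rw [commonZeros, ← map_univ_equiv (consPairEquiv (ZMod 2) m), filter_map]
  congr 1
  ext ⟨⟨a, b⟩, t⟩
  simp [consPairEquiv_apply, sigma_tau_consPair_eq_zero_iff, commonZeros]

theorem card_commonZeros (m : ℕ) : #(commonZeros m) = 2 ^ m := by
  induction m with
  | zero => decide
  | succ m ih =>
    rw [commonZeros_succ, card_map, card_product, diag_card, ih, card_univ, ZMod.card, pow_succ']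

theorem sigma_tau_common_zeros_general (m : ℕ) :
    (sigma m 0 = 0 ∧ tau m 0 = 0) ∧
    (Finset.univ.filter
      (fun i : Fin (2 * m) → ZMod 2 => sigma m i = 0 ∧ tau m i = 0)).card = 2 ^ m :=
  ⟨(mem_filter.1 (zero_mem_commonZeros m)).2, card_commonZeros m⟩

/-- For every `m ≥ 1` there exists `i` with `σ_m(i) = τ_m(i) = 0` (e.g. `i = 0`);
in fact the number of such `i` is exactly `2^m`. -/
theorem sigma_tau_common_zeros (m : ℕ) (hm : 1 ≤ m) :
    (sigma m 0 = 0 ∧ tau m 0 = 0) ∧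
    (Finset.univ.filter
      (fun i : Fin (2 * m) → ZMod 2 => sigma m i = 0 ∧ tau m i = 0)).card = 2 ^ m :=
  sigma_tau_common_zeros_general m
end

section
/- If f : (ZMod 2)^n → ZMod 2 (n even) is a bent function, then its Cayley graph — the graph on vertex set (ZMod 2)^n with x adjacent to y iff f(x+y) = 1, assuming f(0) = 0 — is strongly regular with λ = μ. -/
/-- The Cayley graph of a Boolean function `f` with `f 0 = 0`:
vertices `x ≠ y` are adjacent iff `f (x + y) = 1`. -/
def cayley (n : ℕ) (f : (Fin n → ZMod 2) → ZMod 2) : SimpleGraph (Fin n → ZMod 2) where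
  Adj x y := x ≠ y ∧ f (x + y) = 1
  symm := by constructor; intro x y h; exact ⟨h.1.symm, by rw [add_comm]; exact h.2⟩
  loopless := by constructor; intro x h; exact h.1 rfl

instance (n : ℕ) (f : (Fin n → ZMod 2) → ZMod 2) : DecidableRel (cayley n f).Adj :=
  fun _ _ => instDecidableAnd

/-! Bentness says that the Walsh transform `W f a = ∑ₓ (-1)^(f x + a·x)` has constant square
`2^n`. Since `W f ^ 2` is the Fourier transform of the autocorrelation
`d ↦ ∑ₓ (-1)^(f x + f (x + d))`, the autocorrelation vanishes at every `d ≠ 0`. Translating by `x`,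
the common neighbours of `x ≠ y` correspond to the `w` with `f w = f (w + x + y) = 1`; their number
is fixed by the autocorrelation at `x + y` together with the weight of `f`, so it is the same for
all pairs, adjacent or not. -/

namespace BooleanFunction

open Finset

def chi (u : ZMod 2) : ℤ := (-1) ^ u.val

lemma chi_add : ∀ u v : ZMod 2, chi (u + v) = chi u * chi v := by decide

lemma chi_add_of_ne_zero : ∀ u v : ZMod 2, v ≠ 0 → chi (u + v) = -chi u := by decide

lemma chi_mul_chi : ∀ u v : ZMod 2, chi u * chi v =
    1 - 2 * (if u = 1 then 1 else 0) - 2 * (if v = 1 then 1 else 0)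
      + 4 * (if u = 1 ∧ v = 1 then 1 else 0) := by decide

lemma sum_chi_mul_chi {α : Type*} [Fintype α] (f g : α → ZMod 2) :
    ∑ x, chi (f x) * chi (g x) = Fintype.card α - 2 * #{x | f x = 1} - 2 * #{x | g x = 1}
      + 4 * #{x | f x = 1 ∧ g x = 1} := by
  simp only [chi_mul_chi, sum_add_distrib, sum_sub_distrib, ← mul_sum, sum_boole, sum_const,
    card_univ, nsmul_eq_mul, mul_one]

section Pi

variable {ι : Type*}

lemma pi_add_self (x : ι → ZMod 2) : x + x = 0 :=
  funext fun j => CharTwo.add_self_eq_zero (x j)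

lemma pi_add_add_cancel_left (x y : ι → ZMod 2) : x + (x + y) = y := by
  rw [← add_assoc, pi_add_self, zero_add]

lemma pi_add_eq_zero_iff {x y : ι → ZMod 2} : x + y = 0 ↔ x = y := by
  rw [add_eq_zero_iff_eq_neg, neg_eq_of_add_eq_zero_left (pi_add_self y)]

end Pi

variable {n : ℕ}

lemma dotp_add_left (a b x : Fin n → ZMod 2) :
    dotp n (a + b) x = dotp n a x + dotp n b x := by
  simp [dotp, add_mul, sum_add_distrib]

lemma dotp_add_right (a x y : Fin n → ZMod 2) :
    dotp n a (x + y) = dotp n a x + dotp n a y := by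
  simp [dotp, mul_add, sum_add_distrib]

lemma dotp_zero_right (a : Fin n → ZMod 2) : dotp n a 0 = 0 := by
  simp [dotp]

lemma dotp_single_left (j : Fin n) (x : Fin n → ZMod 2) : dotp n (Pi.single j 1) x = x j := by
  simp [dotp, Pi.single_apply]

lemma sum_chi_dotp (d : Fin n → ZMod 2) :
    ∑ a, chi (dotp n a d) = if d = 0 then 2 ^ n else 0 := by
  split_ifs with hd
  · simp [hd, dotp_zero_right, chi]
  obtain ⟨j, hj⟩ : ∃ j, d j ≠ 0 := Function.ne_iff.mp hd
  have hflip : ∀ a, chi (dotp n (a + Pi.single j 1) d) = -chi (dotp n a d) := fun a => by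
    rw [dotp_add_left, dotp_single_left, chi_add_of_ne_zero _ _ hj]
  have := Fintype.sum_equiv (Equiv.addRight (Pi.single j 1)) _ (fun a => chi (dotp n a d))
    fun a => rfl
  simp only [Equiv.coe_addRight, hflip, sum_neg_distrib] at this
  linarith

lemma sq_eq_two_pow_of_abs_eq {R : Type*} [Ring R] [LinearOrder R] [IsOrderedRing R] {n : ℕ}
    (hn : Even n) {z : R} (h : |z| = 2 ^ (n / 2)) : z ^ 2 = 2 ^ n := by
  rw [← sq_abs, h, ← pow_mul, Nat.div_mul_cancel hn.two_dvd]

def walsh (f : (Fin n → ZMod 2) → ZMod 2) (a : Fin n → ZMod 2) : ℤ :=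
  ∑ x, chi (f x + dotp n a x)

lemma sum_chi_dotp_mul_walsh_sq (f : (Fin n → ZMod 2) → ZMod 2) (d : Fin n → ZMod 2) :
    ∑ a, chi (dotp n a d) * walsh f a ^ 2 = 2 ^ n * ∑ x, chi (f x) * chi (f (x + d)) := by
  have hexpand : ∀ a, chi (dotp n a d) * walsh f a ^ 2
      = ∑ x, ∑ y, chi (f x) * chi (f y) * chi (dotp n a (x + y + d)) := fun a => by
    rw [sq, walsh, sum_mul_sum, mul_sum]
    refine sum_congr rfl fun x _ => ?_
    rw [mul_sum]
    refine sum_congr rfl fun y _ => ?_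
    simp only [chi_add, dotp_add_right]
    ring
  have hzero : ∀ x y : Fin n → ZMod 2, x + y + d = 0 ↔ y = x + d := fun x y => by
    rw [pi_add_eq_zero_iff]
    constructor
    · rintro rfl
      exact (pi_add_add_cancel_left x y).symm
    · rintro rfl
      exact pi_add_add_cancel_left x d
  calc ∑ a, chi (dotp n a d) * walsh f a ^ 2
      = ∑ x, ∑ y, chi (f x) * chi (f y) * ∑ a, chi (dotp n a (x + y + d)) := by
        simp only [hexpand, mul_sum]
        rw [sum_comm]
        exact sum_congr rfl fun x _ => sum_comm
    _ = ∑ x, ∑ y, if y = x + d then chi (f x) * chi (f y) * 2 ^ n else 0 := by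
        simp only [sum_chi_dotp, hzero, mul_ite, mul_zero]
    _ = 2 ^ n * ∑ x, chi (f x) * chi (f (x + d)) := by
        simp only [sum_ite_eq', mem_univ, if_true, mul_sum]
        exact sum_congr rfl fun x _ => by ring

lemma autocorrelation_eq_zero_of_bent (hn : Even n) {f : (Fin n → ZMod 2) → ZMod 2}
    (hbent : ∀ a, |walsh f a| = 2 ^ (n / 2)) {d : Fin n → ZMod 2} (hd : d ≠ 0) :
    ∑ x, chi (f x) * chi (f (x + d)) = 0 := by
  have h := sum_chi_dotp_mul_walsh_sq f d
  simp only [fun a => sq_eq_two_pow_of_abs_eq hn (hbent a), ← sum_mul, sum_chi_dotp, if_neg hd,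
    zero_mul] at h
  exact (mul_eq_zero.mp h.symm).resolve_left (by positivity)

def weight {α : Type*} [Fintype α] (f : α → ZMod 2) : ℕ := #{x | f x = 1}

def overlap (f : (Fin n → ZMod 2) → ZMod 2) (d : Fin n → ZMod 2) : ℕ :=
  #{x | f x = 1 ∧ f (x + d) = 1}

lemma four_mul_overlap_of_bent (hn : Even n) {f : (Fin n → ZMod 2) → ZMod 2}
    (hbent : ∀ a, |walsh f a| = 2 ^ (n / 2)) {d : Fin n → ZMod 2} (hd : d ≠ 0) :
    4 * (overlap f d : ℤ) = 4 * weight f - 2 ^ n := by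
  have h := autocorrelation_eq_zero_of_bent hn hbent hd
  have htranslate : #{x | f (x + d) = 1} = #{x | f x = 1} :=
    card_equiv (Equiv.addRight d) fun x => by simp
  rw [sum_chi_mul_chi, htranslate] at h
  simp only [Fintype.card_pi, ZMod.card, prod_const, card_univ, Fintype.card_fin] at h
  rw [overlap, weight]
  push_cast at h
  linarith

lemma exists_forall_overlap_eq_of_bent (hn : Even n) {f : (Fin n → ZMod 2) → ZMod 2}
    (hbent : ∀ a, |walsh f a| = 2 ^ (n / 2)) : ∃ l, ∀ d ≠ 0, overlap f d = l := by
  refine ⟨overlap f 1, fun d hd => ?_⟩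
  obtain ⟨j, hj⟩ := Function.ne_iff.mp hd
  have h1 : (1 : Fin n → ZMod 2) ≠ 0 := fun h => one_ne_zero (congrFun h j)
  have := four_mul_overlap_of_bent hn hbent hd
  have := four_mul_overlap_of_bent hn hbent h1
  omega

section Cayley

variable {f : (Fin n → ZMod 2) → ZMod 2}

lemma cayley_adj_iff (hf0 : f 0 = 0) {x y : Fin n → ZMod 2} :
    (cayley n f).Adj x y ↔ f (x + y) = 1 :=
  ⟨And.right, fun h => ⟨fun hxy => by simp [hxy, pi_add_self, hf0] at h, h⟩⟩

lemma degree_cayley (hf0 : f 0 = 0) (x : Fin n → ZMod 2) : (cayley n f).degree x = weight f :=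
  card_equiv (Equiv.addLeft x) fun y => by simp [cayley_adj_iff hf0]

lemma card_commonNeighbors_cayley (hf0 : f 0 = 0) (x y : Fin n → ZMod 2) :
    Fintype.card ((cayley n f).commonNeighbors x y) = overlap f (x + y) := by
  rw [← Set.toFinset_card]
  refine card_equiv (Equiv.addLeft x) fun z => ?_
  have : x + z + (x + y) = y + z := by rw [add_add_add_comm, pi_add_self, zero_add, add_comm]
  simp [SimpleGraph.mem_commonNeighbors, cayley_adj_iff hf0, this]

end Cayley

end BooleanFunction

open BooleanFunction in
/-- The Cayley graph of a bent function is strongly regular with `λ = μ`. -/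
theorem cayley_bent_isSRG (n : ℕ) (hn : Even n)
    (f : (Fin n → ZMod 2) → ZMod 2) (hf0 : f 0 = 0)
    (hbent : ∀ a, |∑ x : Fin n → ZMod 2, (-1 : ℤ) ^ (f x + dotp n a x).val| = 2 ^ (n / 2)) :
    ∃ k l : ℕ, (cayley n f).IsSRGWith (2 ^ n) k l l := by
  obtain ⟨l, hl⟩ := exists_forall_overlap_eq_of_bent hn hbent
  have hcommon : ∀ v w, v ≠ w → Fintype.card ((cayley n f).commonNeighbors v w) = l :=
    fun v w hvw => by rw [card_commonNeighbors_cayley hf0, hl _ (mt pi_add_eq_zero_iff.mp hvw)]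
  exact ⟨weight f, l,
    { card := by simp
      regular := degree_cayley hf0
      of_adj := fun v w hvw => hcommon v w hvw.ne
      of_not_adj := fun v w hvw _ => hcommon v w hvw }⟩
end
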